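/- arXiv:2004.03330 — 4 statements merged into one kernel-verified Lean document; each statement's English description precedes it below -/
import Mathlib

section
/- Define L^{(q,λ)}(x,a;θ) := e^{θx}( W̄^{(q)}(x−a;θ) − W̄^{(q+λ)}(x;θ) + λ ∫_0^{x−a} W^{(q)}(y) e^{−θy} W̄^{(q+λ)}(x−y;θ) dy ), where W̄^{(q)}(x;θ) := ∫_0^x e^{−θz} W^{(q)}(z) dz. Then for every θ with ψ(θ) ≠ q+λ and all a, x ∈ ℝ: L^{(q,λ)}(x,a;θ) = ( e^{θa} Z^{(q)}(x−a;θ) − 𝒵_a^{(q,λ)}(x;θ) ) / ( q+λ−ψ(θ) ), where 𝒵_a^{(q,λ)}(x;θ) := Z^{(q+λ)}(x;θ) − λ ∫_a^x W^{(q)}(x−y) Z^{(q+λ)}(y;θ) dy. -/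
open MeasureTheory

/-- `W̄^{(q)}(x;θ) = ∫_0^x e^{−θz} W(z) dz`. -/
noncomputable def Wbar (W : ℝ → ℝ) (θ x : ℝ) : ℝ :=
  ∫ z in (0 : ℝ)..x, Real.exp (-θ * z) * W z

/-- `Z^{(q)}(x;θ) = e^{θx}(1 + (q − ψ(θ)) W̄^{(q)}(x;θ))`. -/
noncomputable def Zfun (ψ : ℝ → ℝ) (q : ℝ) (W : ℝ → ℝ) (θ x : ℝ) : ℝ :=
  Real.exp (θ * x) * (1 + (q - ψ θ) * Wbar W θ x)

/-- `L^{(q,λ)}(x,a;θ)` built from the `q`-scale function `Wq` and the `(q+λ)`-scale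
function `Wql`. -/
noncomputable def Lfun (Wq Wql : ℝ → ℝ) (lam θ x a : ℝ) : ℝ :=
  Real.exp (θ * x) *
    (Wbar Wq θ (x - a) - Wbar Wql θ x
      + lam * ∫ y in (0 : ℝ)..(x - a), Wq y * Real.exp (-θ * y) * Wbar Wql θ (x - y))

/-- `𝒵_a^{(q,λ)}(x;θ) = Z^{(q+λ)}(x;θ) − λ ∫_a^x W^{(q)}(x−y) Z^{(q+λ)}(y;θ) dy`. -/
noncomputable def Zcal (ψ : ℝ → ℝ) (q lam : ℝ) (Wq Wql : ℝ → ℝ) (θ a x : ℝ) : ℝ :=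
  Zfun ψ (q + lam) Wql θ x - lam * ∫ y in a..x, Wq (x - y) * Zfun ψ (q + lam) Wql θ y

/-! The substitution `z = x - y` turns `∫_a^x W^{(q)}(x-y) Z^{(q+λ)}(y;θ) dy` into
`e^{θx} (W̄^{(q)}(x-a;θ) + (q+λ-ψ(θ)) ∫_0^{x-a} W^{(q)}(z) e^{-θz} W̄^{(q+λ)}(x-z;θ) dz)`;
inserted into `𝒵_a^{(q,λ)}`, this leaves a polynomial identity once the denominator
`q+λ-ψ(θ)` is cleared. Splitting the integral is legitimate because a function vanishing on
`(-∞, 0)` and continuous on `[0, ∞)` is interval integrable on every interval. -/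

open Real

lemma intervalIntegrable_of_continuousOn_Ici {f : ℝ → ℝ} (hneg : ∀ x < (0 : ℝ), f x = 0)
    (hcont : ContinuousOn f (Set.Ici 0)) (a b : ℝ) : IntervalIntegrable f volume a b := by
  have hf : (Set.Ici 0).indicator f = f :=
    Set.indicator_eq_self.2 fun x hx => not_lt.1 fun hx0 => hx (hneg x hx0)
  rw [intervalIntegrable_iff, ← hf, integrableOn_indicator_iff measurableSet_Ici]
  exact ((hcont.mono Set.Icc_subset_Ici_self).integrableOn_Icc (b := max a b)).mono_set
    fun y ⟨hy0, hy⟩ => ⟨hy0, hy.2⟩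

lemma continuous_Wbar {W : ℝ → ℝ} (hW : ∀ a b, IntervalIntegrable W volume a b) (θ : ℝ) :
    Continuous (Wbar W θ) :=
  intervalIntegral.continuous_primitive
    (fun a b => (hW a b).continuousOn_mul (by fun_prop)) 0

lemma integral_comp_sub_mul_exp_mul (W g : ℝ → ℝ) (θ a x : ℝ) :
    ∫ y in a..x, W (x - y) * (exp (θ * y) * g y)
      = exp (θ * x) * ∫ z in (0 : ℝ)..(x - a), W z * exp (-θ * z) * g (x - z) := by
  have hsubst := intervalIntegral.integral_comp_sub_left
    (fun z => W z * exp (-θ * z) * g (x - z)) x (a := a) (b := x)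
  rw [sub_self] at hsubst
  rw [← hsubst, ← intervalIntegral.integral_const_mul]
  refine intervalIntegral.integral_congr fun y _ => ?_
  have hexp : exp (θ * y) = exp (θ * x) * exp (-θ * (x - y)) := by
    rw [← exp_add]; ring_nf
  simp only [sub_sub_cancel, hexp]
  ring

theorem stmt7_general
    (ψ : ℝ → ℝ) (q lam : ℝ)
    (Wq Wql : ℝ → ℝ)
    (hWqneg : ∀ x < (0 : ℝ), Wq x = 0) (hWqlneg : ∀ x < (0 : ℝ), Wql x = 0)
    (hWqcont : ContinuousOn Wq (Set.Ici 0)) (hWqlcont : ContinuousOn Wql (Set.Ici 0))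
    (θ : ℝ) (hθ : ψ θ ≠ q + lam) :
    ∀ a x : ℝ,
      Lfun Wq Wql lam θ x a
        = (Real.exp (θ * a) * Zfun ψ q Wq θ (x - a) - Zcal ψ q lam Wq Wql θ a x)
            / (q + lam - ψ θ) := by
  intro a x
  set J := ∫ z in (0 : ℝ)..(x - a), Wq z * exp (-θ * z) * Wbar Wql θ (x - z)
  have hWq_int : IntervalIntegrable (fun z => Wq z * exp (-θ * z)) volume 0 (x - a) :=
    (intervalIntegrable_of_continuousOn_Ici hWqneg hWqcont _ _).mul_continuousOn (by fun_prop)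
  have hJ_int : IntervalIntegrable (fun z => Wq z * exp (-θ * z) * Wbar Wql θ (x - z))
      volume 0 (x - a) :=
    hWq_int.mul_continuousOn ((continuous_Wbar (intervalIntegrable_of_continuousOn_Ici hWqlneg
      hWqlcont) θ).comp (continuous_sub_left x)).continuousOn
  have hconv : ∫ y in a..x, Wq (x - y) * Zfun ψ (q + lam) Wql θ y
      = exp (θ * x) * (Wbar Wq θ (x - a) + (q + lam - ψ θ) * J) := calc
    _ = exp (θ * x) * ∫ z in (0 : ℝ)..(x - a),
          (Wq z * exp (-θ * z) + (q + lam - ψ θ) * (Wq z * exp (-θ * z) * Wbar Wql θ (x - z))) := by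
      simp only [Zfun]
      rw [integral_comp_sub_mul_exp_mul]
      congr 1
      exact intervalIntegral.integral_congr fun z _ => by ring
    _ = _ := by
      rw [intervalIntegral.integral_add hWq_int (hJ_int.const_mul _), intervalIntegral.integral_const_mul,
        Wbar]
      simp only [mul_comm (exp _) (Wq _)]
      rfl
  have hexp : exp (θ * a) * exp (θ * (x - a)) = exp (θ * x) := by
    rw [← exp_add]; ring_nf
  rw [eq_div_iff (sub_ne_zero.mpr hθ.symm), Lfun, Zcal, hconv, Zfun, Zfun]
  linear_combination (-1 - (q - ψ θ) * Wbar Wq θ (x - a)) * hexp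

/-- Lemma 4.1 of the paper.  For every `θ` with `ψ θ ≠ q + lam` and all
`a, x ∈ ℝ`:
`L^{(q,λ)}(x,a;θ) = (e^{θa} Z^{(q)}(x−a;θ) − 𝒵_a^{(q,λ)}(x;θ)) / (q + λ − ψ(θ))`. -/
theorem stmt7
    (ψ : ℝ → ℝ) (q lam : ℝ) (hq : 0 ≤ q) (hlam : 0 < lam)
    (Wq Wql : ℝ → ℝ)
    (hWqneg : ∀ x < (0 : ℝ), Wq x = 0) (hWqlneg : ∀ x < (0 : ℝ), Wql x = 0)
    (hWqcont : ContinuousOn Wq (Set.Ici 0)) (hWqlcont : ContinuousOn Wql (Set.Ici 0))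
    (hWqmeas : Measurable Wq) (hWqlmeas : Measurable Wql)
    (θ : ℝ) (hθ : ψ θ ≠ q + lam) :
    ∀ a x : ℝ,
      Lfun Wq Wql lam θ x a
        = (Real.exp (θ * a) * Zfun ψ q Wq θ (x - a) - Zcal ψ q lam Wq Wql θ a x)
            / (q + lam - ψ θ) :=
  stmt7_general ψ q lam Wq Wql hWqneg hWqlneg hWqcont hWqlcont θ hθ
end

section
/- Define h(l,u;θ) := (K − e^{θu}) − (K − e^{θl}) Z^{(r+λ)}(u−l;Φ(r)) + λ ∫_0^{u−l} (K − e^{θ(u−y)}) W^{(r+λ)}(y) dy for l < u. Then ∂h/∂l (l,u;θ) = [θ e^{θl} + (K − e^{θl}) Φ(r)] · Z^{(r+λ)}(u−l;Φ(r)); in particular h(u,u;θ) = 0 and ∂h/∂l |_{l=u−} = θe^{θu} + (K − e^{θu})Φ(r). -/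
open MeasureTheory

/-- `Z^{(r+λ)}(x;Φ(r)) = e^{Φ(r)x}(1 + λ ∫_0^x e^{−Φ(r)z} W(z) dz)` (using `ψ(Φ(r)) = r`). -/
noncomputable def Zh (W : ℝ → ℝ) (lam Φ x : ℝ) : ℝ :=
  Real.exp (Φ * x) * (1 + lam * ∫ z in (0 : ℝ)..x, Real.exp (-Φ * z) * W z)

/-- `h(l,u;θ) = (K − e^{θu}) − (K − e^{θl}) Z^{(r+λ)}(u−l;Φ(r))
      + λ ∫_0^{u−l} (K − e^{θ(u−y)}) W(y) dy`. -/
noncomputable def hfun (W : ℝ → ℝ) (lam Φ K θ l u : ℝ) : ℝ :=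
  (K - Real.exp (θ * u)) - (K - Real.exp (θ * l)) * Zh W lam Φ (u - l)
    + lam * ∫ y in (0 : ℝ)..(u - l), (K - Real.exp (θ * (u - y))) * W y


section

variable {W : ℝ → ℝ} (lam Φ : ℝ)

@[simp]
lemma Zh_zero : Zh W lam Φ 0 = 1 := by
  simp [Zh]

lemma hasDerivAt_Zh (hW : Continuous W) (x : ℝ) :
    HasDerivAt (Zh W lam Φ) (Φ * Zh W lam Φ x + lam * W x) x := by
  have hI : HasDerivAt (fun t => ∫ z in (0 : ℝ)..t, Real.exp (-Φ * z) * W z)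
      (Real.exp (-Φ * x) * W x) x :=
    ((by fun_prop : Continuous fun z => Real.exp (-Φ * z) * W z).integral_hasStrictDerivAt
      0 x).hasDerivAt
  have hE : HasDerivAt (fun t => Real.exp (Φ * t)) (Real.exp (Φ * x) * Φ) x := by
    simpa using ((hasDerivAt_id x).const_mul Φ).exp
  have hcancel : Real.exp (Φ * x) * Real.exp (-Φ * x) = 1 := by
    rw [← Real.exp_add]; simp
  refine (hE.mul ((hI.const_mul lam).const_add 1)).congr_deriv ?_
  simp only [Zh]
  linear_combination (lam * W x) * hcancel

variable (K θ : ℝ)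

lemma hfun_self (u : ℝ) : hfun W lam Φ K θ u u = 0 := by
  simp [hfun]

/-- The boundary terms `±λ (K − e^{θl}) W(u−l)` coming from `Z` and from the integral cancel. -/
lemma hasDerivAt_hfun_left (hW : Continuous W) (l u : ℝ) :
    HasDerivAt (fun l' => hfun W lam Φ K θ l' u)
      ((θ * Real.exp (θ * l) + (K - Real.exp (θ * l)) * Φ) * Zh W lam Φ (u - l)) l := by
  have hsub : HasDerivAt (fun l' : ℝ => u - l') (-1) l := by
    simpa using (hasDerivAt_id l).const_sub u
  have hZ : HasDerivAt (fun l' => Zh W lam Φ (u - l'))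
      ((Φ * Zh W lam Φ (u - l) + lam * W (u - l)) * (-1)) l :=
    (hasDerivAt_Zh lam Φ hW (u - l)).comp l hsub
  have hE : HasDerivAt (fun l' => K - Real.exp (θ * l')) (-(Real.exp (θ * l) * θ)) l := by
    simpa using ((hasDerivAt_id l).const_mul θ).exp.const_sub K
  have hI : HasDerivAt (fun l' => ∫ y in (0 : ℝ)..(u - l'), (K - Real.exp (θ * (u - y))) * W y)
      ((K - Real.exp (θ * (u - (u - l)))) * W (u - l) * (-1)) l :=
    ((by fun_prop : Continuous fun y => (K - Real.exp (θ * (u - y))) * W y)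
      |>.integral_hasStrictDerivAt 0 (u - l)).hasDerivAt.comp l hsub
  rw [sub_sub_cancel] at hI
  refine (((hE.mul hZ).const_sub _).add (hI.const_mul lam)).congr_deriv ?_
  ring

end

theorem stmt13_general
    (W : ℝ → ℝ) (hW : Continuous W)
    (lam Φ K θ : ℝ) :
    (∀ l u : ℝ,
      HasDerivAt (fun l' => hfun W lam Φ K θ l' u)
        ((θ * Real.exp (θ * l) + (K - Real.exp (θ * l)) * Φ) * Zh W lam Φ (u - l)) l)
    ∧ (∀ u : ℝ, hfun W lam Φ K θ u u = 0)
    ∧ (∀ u : ℝ,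
        (θ * Real.exp (θ * u) + (K - Real.exp (θ * u)) * Φ) * Zh W lam Φ 0
          = θ * Real.exp (θ * u) + (K - Real.exp (θ * u)) * Φ) :=
  ⟨hasDerivAt_hfun_left lam Φ K θ hW, hfun_self lam Φ K θ, fun _ => by rw [Zh_zero, mul_one]⟩

/-- `∂h/∂l (l,u;θ) = (θ e^{θl} + (K − e^{θl}) Φ(r)) Z^{(r+λ)}(u−l;Φ(r))`;
in particular `h(u,u;θ) = 0` and `∂h/∂l |_{l=u−} = θ e^{θu} + (K − e^{θu}) Φ(r)`
(since `Z^{(r+λ)}(0;Φ(r)) = 1`). -/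
theorem stmt13
    (W : ℝ → ℝ) (hW : Continuous W)
    (lam Φ K θ : ℝ) (hK : 0 < K) (hlam : 0 < lam) :
    (∀ l u : ℝ,
      HasDerivAt (fun l' => hfun W lam Φ K θ l' u)
        ((θ * Real.exp (θ * l) + (K - Real.exp (θ * l)) * Φ) * Zh W lam Φ (u - l)) l)
    ∧ (∀ u : ℝ, hfun W lam Φ K θ u u = 0)
    ∧ (∀ u : ℝ,
        (θ * Real.exp (θ * u) + (K - Real.exp (θ * u)) * Φ) * Zh W lam Φ 0
          = θ * Real.exp (θ * u) + (K - Real.exp (θ * u)) * Φ) :=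
  stmt13_general W hW lam Φ K θ
end

section
/- Let (X, N^λ) generate a filtration, r < 0, and suppose the value function V̄_p(s) := sup_{τ ∈ Ā} E_s[e^{−rτ}(K − S_τ)^+ 1_{τ<∞}] is finite and satisfies the dynamic programming inequality V̄_p(S_{T_k}) ≥ E[e^{−r(T_{k+1}−T_k)} V̄_p(S_{T_{k+1}}) | F_{T_k}]. If in addition inf_{0<s≤K}(V̄_p(s) − (K−s)^+) = ε > 0, then a contradiction arises; hence inf_{0<s≤K}(V̄_p(s) − (K−s)^+) = 0. -/
open MeasureTheory ProbabilityTheory Filter Topology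

/-- The set of achievable expected payoffs for the auxiliary put problem: the supremum is
taken over stopping times valued in the observation times `{0 = T_0, T_1, T_2, …} ∪ {∞}`,
encoded by `𝒢`-stopping indices `N : Ω → ℕ∞`.  Here `S_{T_k} = s e^{Y_k}` with `Y_0 = 0`,
`T_0 = 0`. -/
noncomputable def stopVals {Ω : Type*} {m : MeasurableSpace Ω} (μ : Measure Ω)
    (𝒢 : Filtration ℕ m) (T Y : ℕ → Ω → ℝ) (r K s : ℝ) : Set ℝ :=
  {v : ℝ | ∃ N : Ω → ℕ∞,
    (∀ k : ℕ, MeasurableSet[𝒢 k] {ω | N ω = (k : ℕ∞)}) ∧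
    v = ∫ ω in {ω | N ω ≠ ⊤},
          Real.exp (-r * T (N ω).toNat ω) *
            max (K - s * Real.exp (Y (N ω).toNat ω)) 0 ∂μ}


theorem aux_key {Ω : Type*} {m : MeasurableSpace Ω} (μ : Measure Ω) [IsProbabilityMeasure μ]
    (𝒢 : Filtration ℕ m) (T Y : ℕ → Ω → ℝ)
    (hT0 : ∀ ω, T 0 ω = 0) (hY0 : ∀ ω, Y 0 ω = 0)
    (r K s c : ℝ) (hs : 0 < s) (hc : 0 ≤ c)
    (Vbar : ℝ → ℝ)
    (hpos : ∀ x : ℝ, 0 < x → 0 < Vbar x)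
    (hpt : ∀ x : ℝ, 0 < x → (1 + c) * max (K - x) 0 ≤ Vbar x)
    (hsuper : Supermartingale
        (fun k ω => Real.exp (-r * T k ω) * Vbar (s * Real.exp (Y k ω))) 𝒢 μ)
    {v : ℝ} (hv : v ∈ stopVals μ 𝒢 T Y r K s) :
    (1 + c) * v ≤ Vbar s := by
  obtain ⟨N, hNm, hveq⟩ := hv
  set f : ℕ → Ω → ℝ := fun k ω => Real.exp (-r * T k ω) * Vbar (s * Real.exp (Y k ω)) with hf
  set F : Ω → ℝ := fun ω =>
    Real.exp (-r * T (N ω).toNat ω) * max (K - s * Real.exp (Y (N ω).toNat ω)) 0 with hF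
  set A : ℕ → Set Ω := fun k => {ω | N ω = (k : ℕ∞)} with hAdef
  have hA : ∀ k, MeasurableSet (A k) := fun k => 𝒢.le k _ (hNm k)
  have hfnn : ∀ k ω, 0 ≤ f k ω := fun k ω =>
    le_of_lt (mul_pos (Real.exp_pos _) (hpos _ (mul_pos hs (Real.exp_pos _))))
  have hfint : ∀ k, Integrable (f k) μ := fun k => hsuper.integrable k
  have hf0 : ∫ ω, f 0 ω ∂μ = Vbar s := by
    have : (fun ω => f 0 ω) = fun _ => Vbar s := by
      funext ω; simp [hf, hT0 ω, hY0 ω]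
    rw [this, integral_const]; simp
  set B : ℕ → Set Ω := fun n => {ω | (n : ℕ∞) ≤ N ω} with hBdef
  have hBmeas : ∀ n : ℕ, MeasurableSet[𝒢 n] (B (n + 1)) := by
    intro n
    have : B (n + 1) = (⋃ k ∈ Finset.range (n + 1), A k)ᶜ := by
      ext ω
      simp only [hBdef, hAdef, Set.mem_setOf_eq, Set.mem_compl_iff, Set.mem_iUnion,
        Finset.mem_range, not_exists]
      constructor
      · intro h k hk hNk
        rw [hNk] at h
        exact absurd (Nat.cast_le.mp h) (by omega)
      · intro h
        rcases eq_or_ne (N ω) ⊤ with htop | htop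
        · rw [htop]; exact le_top
        · obtain ⟨j, hj⟩ := WithTop.ne_top_iff_exists.mp htop
          by_cases hjn : j < n + 1
          · exact absurd hj.symm (h j hjn)
          · rw [← hj]; exact Nat.cast_le.mpr (by omega)
    rw [this]
    exact (Finset.measurableSet_biUnion _ fun k hk =>
      𝒢.mono (Nat.lt_succ_iff.mp (Finset.mem_range.mp hk)) _ (hNm k)).compl
  have hmain : ∀ n : ℕ,
      (∑ k ∈ Finset.range n, ∫ ω in A k, f k ω ∂μ) + ∫ ω in B n, f n ω ∂μ ≤ Vbar s := by
    intro n
    induction n with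
    | zero =>
      have : B 0 = Set.univ := by
        ext ω; simp [hBdef]
      rw [this, Finset.sum_range_zero, Measure.restrict_univ, hf0, zero_add]
    | succ n ih =>
      have hsplitset : B n = A n ∪ B (n + 1) := by
        ext ω
        simp only [hBdef, hAdef, Set.mem_setOf_eq, Set.mem_union]
        constructor
        · intro h
          rcases eq_or_lt_of_le h with heq | hlt
          · exact Or.inl heq.symm
          · exact Or.inr (ENat.add_one_le_iff (by simp) |>.mpr hlt)
        · rintro (h | h)
          · exact le_of_eq h.symm
          · exact le_trans (by exact_mod_cast Nat.le_succ n) h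
      have hdisj : Disjoint (A n) (B (n + 1)) := by
        rw [Set.disjoint_left]
        intro ω h1 h2
        simp only [hAdef, Set.mem_setOf_eq] at h1
        simp only [hBdef, Set.mem_setOf_eq, h1] at h2
        exact absurd (Nat.cast_le.mp h2) (by omega)
      have hsplit : ∫ ω in B n, f n ω ∂μ
          = ∫ ω in A n, f n ω ∂μ + ∫ ω in B (n + 1), f n ω ∂μ := by
        rw [hsplitset]
        exact setIntegral_union hdisj (𝒢.le n _ (hBmeas n)) ((hfint n).integrableOn)
          ((hfint n).integrableOn)
      have hsm : ∫ ω in B (n + 1), f (n + 1) ω ∂μ ≤ ∫ ω in B (n + 1), f n ω ∂μ :=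
        hsuper.setIntegral_le (Nat.le_succ n) (hBmeas n)
      rw [Finset.sum_range_succ]
      linarith [ih]
  have hsum : ∀ n : ℕ, (∑ k ∈ Finset.range n, ∫ ω in A k, f k ω ∂μ) ≤ Vbar s := by
    intro n
    have h0 : 0 ≤ ∫ ω in B n, f n ω ∂μ := integral_nonneg fun ω => hfnn n ω
    linarith [hmain n]
  by_cases hFint : IntegrableOn F {ω | N ω ≠ ⊤} μ
  · have hU : {ω | N ω ≠ ⊤} = ⋃ k, A k := by
      ext ω
      simp only [Set.mem_setOf_eq, Set.mem_iUnion, hAdef]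
      constructor
      · intro h
        obtain ⟨j, hj⟩ := WithTop.ne_top_iff_exists.mp h
        exact ⟨j, hj.symm⟩
      · rintro ⟨j, hj⟩; rw [hj]; simp
    have hdisj : Pairwise (Function.onFun Disjoint A) := by
      intro i j hij
      rw [Function.onFun, Set.disjoint_left]
      intro ω h1 h2
      simp only [hAdef, Set.mem_setOf_eq] at h1 h2
      exact hij (Nat.cast_injective (h1.symm.trans h2))
    have hsumF : HasSum (fun k => ∫ ω in A k, F ω ∂μ) (∫ ω in {ω | N ω ≠ ⊤}, F ω ∂μ) := by
      rw [hU] at hFint ⊢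
      exact hasSum_integral_iUnion hA hdisj hFint
    have htend : Tendsto (fun n => ∑ k ∈ Finset.range n, ∫ ω in A k, F ω ∂μ) atTop (𝓝 v) := by
      rw [hveq]; exact hsumF.tendsto_sum_nat
    have hk : ∀ k : ℕ, (1 + c) * ∫ ω in A k, F ω ∂μ ≤ ∫ ω in A k, f k ω ∂μ := by
      intro k
      rw [← integral_const_mul]
      have hFA : IntegrableOn F (A k) μ := by
        apply hFint.mono_set
        intro ω hω
        simp only [hAdef, Set.mem_setOf_eq] at hω
        simp [Set.mem_setOf_eq, hω]
      refine setIntegral_mono_on (hFA.const_mul _) ((hfint k).integrableOn) (hA k) ?_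
      intro ω hω
      simp only [hAdef, Set.mem_setOf_eq] at hω
      have htn : (N ω).toNat = k := by rw [hω]; simp
      simp only [hF, hf, htn]
      calc (1 + c) * (Real.exp (-r * T k ω) * max (K - s * Real.exp (Y k ω)) 0)
          = Real.exp (-r * T k ω) * ((1 + c) * max (K - s * Real.exp (Y k ω)) 0) := by ring
        _ ≤ Real.exp (-r * T k ω) * Vbar (s * Real.exp (Y k ω)) :=
            mul_le_mul_of_nonneg_left (hpt _ (mul_pos hs (Real.exp_pos _)))
              (Real.exp_pos _).le
    refine le_of_tendsto (htend.const_mul (1 + c)) (Eventually.of_forall fun n => ?_)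
    calc (1 + c) * ∑ k ∈ Finset.range n, ∫ ω in A k, F ω ∂μ
        = ∑ k ∈ Finset.range n, (1 + c) * ∫ ω in A k, F ω ∂μ := Finset.mul_sum _ _ _
      _ ≤ ∑ k ∈ Finset.range n, ∫ ω in A k, f k ω ∂μ := Finset.sum_le_sum fun k _ => hk k
      _ ≤ Vbar s := hsum n
  · rw [hveq, integral_undef hFint, mul_zero]
    exact (hpos s hs).le

/-- Lemma 2.5 of the paper.  Suppose the value function
`V̄_p(s) = sup_{τ ∈ Ā} E_s[e^{−rτ}(K − S_τ)⁺ 1_{τ<∞}]` of the auxiliary problem (where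
immediate stopping is allowed) is finite, strictly positive, and the dynamic programming
principle makes `k ↦ e^{−r T_k} V̄_p(S_{T_k})` a supermartingale.  Then
`inf_{0 < s ≤ K} (V̄_p(s) − (K − s)⁺) = 0`. -/
theorem stmt18
    {Ω : Type*} {m : MeasurableSpace Ω} (μ : Measure Ω) [IsProbabilityMeasure μ]
    (𝒢 : Filtration ℕ m)
    (T Y : ℕ → Ω → ℝ)
    (hT0 : ∀ ω, T 0 ω = 0) (hY0 : ∀ ω, Y 0 ω = 0)
    (hTnn : ∀ k ω, 0 ≤ T k ω)
    (r K : ℝ) (hr : r < 0) (hK : 0 < K)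
    (Vbar : ℝ → ℝ)
    (hV : ∀ s : ℝ, 0 < s → Vbar s = sSup (stopVals μ 𝒢 T Y r K s))
    (hbdd : ∀ s : ℝ, 0 < s → BddAbove (stopVals μ 𝒢 T Y r K s))
    (hpos : ∀ s : ℝ, 0 < s → 0 < Vbar s)
    (hsuper : ∀ s : ℝ, 0 < s →
      Supermartingale
        (fun k ω => Real.exp (-r * T k ω) * Vbar (s * Real.exp (Y k ω))) 𝒢 μ) :
    sInf ((fun s => Vbar s - max (K - s) 0) '' Set.Ioc 0 K) = 0 := by
  set I : Set ℝ := (fun s => Vbar s - max (K - s) 0) '' Set.Ioc 0 K with hI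
  -- immediate stopping gives `max (K - s) 0 ∈ stopVals`
  have hmem0 : ∀ s : ℝ, 0 < s → max (K - s) 0 ∈ stopVals μ 𝒢 T Y r K s := by
    intro s hs
    refine ⟨fun _ => (0 : ℕ∞), ?_, ?_⟩
    · intro k
      rcases k with _ | k
      · simp
      · have : {ω : Ω | (0 : ℕ∞) = ((k + 1 : ℕ) : ℕ∞)} = ∅ := by
          ext ω
          simp only [Set.mem_setOf_eq, Set.mem_empty_iff_false, iff_false]
          intro h
          rw [show (0 : ℕ∞) = ((0 : ℕ) : ℕ∞) by simp] at h
          exact absurd (Nat.cast_injective h) (by omega)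
        rw [this]; exact @MeasurableSet.empty Ω (𝒢 (k + 1))
    · have h1 : {ω : Ω | (0 : ℕ∞) ≠ ⊤} = Set.univ := by
        ext ω; simp
      have h2 : (fun ω : Ω => Real.exp (-r * T (0 : ℕ∞).toNat ω) *
          max (K - s * Real.exp (Y (0 : ℕ∞).toNat ω)) 0) = fun _ => max (K - s) 0 := by
        funext ω; simp [hT0 ω, hY0 ω]
      rw [h1, Measure.restrict_univ, h2, integral_const]
      simp
  have hlb : ∀ v ∈ I, (0 : ℝ) ≤ v := by
    rintro v ⟨s, hsI, rfl⟩
    have hs : 0 < s := hsI.1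
    have : max (K - s) 0 ≤ Vbar s := by
      rw [hV s hs]
      exact le_csSup (hbdd s hs) (hmem0 s hs)
    simpa using this
  have hIne : I.Nonempty := ⟨_, ⟨K, ⟨hK, le_refl K⟩, rfl⟩⟩
  have hIbb : BddBelow I := ⟨0, hlb⟩
  have h0le : 0 ≤ sInf I := le_csInf hIne hlb
  by_contra hne
  have hε : 0 < sInf I := lt_of_le_of_ne h0le (Ne.symm hne)
  set ε := sInf I with hεdef
  set c := ε / K with hcdef
  have hc : 0 < c := div_pos hε hK
  -- pointwise bound
  have hpt : ∀ x : ℝ, 0 < x → (1 + c) * max (K - x) 0 ≤ Vbar x := by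
    intro x hx
    by_cases hxK : x ≤ K
    · have hmemI : Vbar x - max (K - x) 0 ∈ I := ⟨x, ⟨hx, hxK⟩, rfl⟩
      have h1 : ε ≤ Vbar x - max (K - x) 0 := csInf_le hIbb hmemI
      have hm0 : 0 ≤ max (K - x) 0 := le_max_right _ _
      have hmK : max (K - x) 0 ≤ K := by
        apply max_le _ hK.le
        linarith
      have h2 : c * max (K - x) 0 ≤ ε := by
        calc c * max (K - x) 0 ≤ c * K := mul_le_mul_of_nonneg_left hmK hc.le
          _ = ε := div_mul_cancel₀ ε hK.ne'
      nlinarith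
    · push_neg at hxK
      have : max (K - x) 0 = 0 := max_eq_right (by linarith)
      rw [this, mul_zero]
      exact (hpos x hx).le
  -- apply the key lemma at `s = K`
  have hkey : ∀ v ∈ stopVals μ 𝒢 T Y r K K, v ≤ Vbar K / (1 + c) := by
    intro v hv
    have := aux_key μ 𝒢 T Y hT0 hY0 r K K c hK hc.le Vbar
      (fun x hx => hpos x hx) hpt (hsuper K hK) hv
    rw [le_div_iff₀ (by linarith)]
    linarith [this]
  have hle : Vbar K ≤ Vbar K / (1 + c) :=
    le_of_eq (hV K hK) |>.trans (csSup_le ⟨_, hmem0 K hK⟩ hkey)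
  have hVK : 0 < Vbar K := hpos K hK
  rw [le_div_iff₀ (by linarith)] at hle
  nlinarith
end

section
/- Convergence of optimal barriers: Fix i ∈ {p,c}. Suppose for each λ > 0 the stopping region is a closed interval D_λ = [L_λ, U_λ] with λ ↦ L_λ nondecreasing and λ ↦ U_λ nonincreasing, D_λ ⊇ D_∞ = [L_∞, U_∞], the value functions V̄_λ satisfy V̄_λ(s) = G(s) for s ∈ D_λ and V̄_λ(s) → V_∞(s) pointwise as λ → ∞, and V_∞(s) > G(s) for s ∉ D_∞. Then L_λ → L_∞ and U_λ → U_∞ as λ → ∞. -/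
open Filter

/-- Theorem 2.11(2): convergence of the optimal barriers.  Suppose for
each observation rate `lam > 0` the stopping region is the interval `[L lam, U lam]`
(on which the value function `Vbar lam` equals the payoff `G`), `lam ↦ L lam` is
nondecreasing, `lam ↦ U lam` is nonincreasing, `[L∞, U∞] ⊆ [L lam, U lam]`,
`Vbar lam → V∞` pointwise as `lam → ∞`, and `V∞ > G` off `[L∞, U∞]`.  Then
`L lam → L∞` and `U lam → U∞` as `lam → ∞`. -/
theorem stmt19
    (G Vinf : ℝ → ℝ) (Vbar : ℝ → ℝ → ℝ)
    (L U : ℝ → ℝ) (Linf Uinf : ℝ)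
    (hLU : Linf ≤ Uinf)
    (hLmono : MonotoneOn L (Set.Ioi 0))
    (hUanti : AntitoneOn U (Set.Ioi 0))
    (hsub : ∀ lam : ℝ, 0 < lam → L lam ≤ Linf ∧ Uinf ≤ U lam)
    (hstop : ∀ lam : ℝ, 0 < lam → ∀ s ∈ Set.Icc (L lam) (U lam), Vbar lam s = G s)
    (hlim : ∀ s : ℝ, Tendsto (fun lam => Vbar lam s) atTop (nhds (Vinf s)))
    (hgap : ∀ s : ℝ, s ∉ Set.Icc Linf Uinf → G s < Vinf s) :
    Tendsto L atTop (nhds Linf) ∧ Tendsto U atTop (nhds Uinf) := by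
  constructor
  · rw [tendsto_order]
    constructor
    · intro a ha
      by_contra h
      have hfreq : ∀ x : ℝ, ∃ y, x ≤ y ∧ L y ≤ a := by
        simpa [not_eventually, not_lt] using h
      have hall : ∀ lam : ℝ, 0 < lam → L lam ≤ a := by
        intro lam hlam
        obtain ⟨lam', hge, hle⟩ := hfreq lam
        exact le_trans (hLmono hlam (lt_of_lt_of_le hlam hge) hge) hle
      set s : ℝ := (a + Linf) / 2 with hs
      have has : a < s := by rw [hs]; linarith
      have hsL : s < Linf := by rw [hs]; linarith
      have hconst : ∀ lam : ℝ, 0 < lam → Vbar lam s = G s := by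
        intro lam hlam
        exact hstop lam hlam s ⟨le_of_lt (lt_of_le_of_lt (hall lam hlam) has),
          le_trans (le_of_lt (lt_of_lt_of_le hsL hLU)) (hsub lam hlam).2⟩
      have hev : (fun lam => Vbar lam s) =ᶠ[atTop] fun _ => G s := by
        filter_upwards [eventually_gt_atTop 0] with lam hlam using hconst lam hlam
      have : Vinf s = G s :=
        tendsto_nhds_unique (hlim s) (Tendsto.congr' hev.symm tendsto_const_nhds)
      have := hgap s (by simp [Set.mem_Icc, not_le.mpr hsL])
      linarith
    · intro a ha
      filter_upwards [eventually_gt_atTop 0] with lam hlam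
      exact lt_of_le_of_lt (hsub lam hlam).1 ha
  · rw [tendsto_order]
    constructor
    · intro a ha
      filter_upwards [eventually_gt_atTop 0] with lam hlam
      exact lt_of_lt_of_le ha (hsub lam hlam).2
    · intro a ha
      by_contra h
      have hfreq : ∀ x : ℝ, ∃ y, x ≤ y ∧ a ≤ U y := by
        simpa [not_eventually, not_lt] using h
      have hall : ∀ lam : ℝ, 0 < lam → a ≤ U lam := by
        intro lam hlam
        obtain ⟨lam', hge, hle⟩ := hfreq lam
        exact le_trans hle (hUanti hlam (lt_of_lt_of_le hlam hge) hge)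
      set s : ℝ := (a + Uinf) / 2 with hs
      have has : s < a := by rw [hs]; linarith
      have hsU : Uinf < s := by rw [hs]; linarith
      have hconst : ∀ lam : ℝ, 0 < lam → Vbar lam s = G s := by
        intro lam hlam
        exact hstop lam hlam s ⟨le_trans (hsub lam hlam).1 (le_trans hLU (le_of_lt hsU)),
          le_of_lt (lt_of_lt_of_le has (hall lam hlam))⟩
      have hev : (fun lam => Vbar lam s) =ᶠ[atTop] fun _ => G s := by
        filter_upwards [eventually_gt_atTop 0] with lam hlam using hconst lam hlam
      have : Vinf s = G s :=
        tendsto_nhds_unique (hlim s) (Tendsto.congr' hev.symm tendsto_const_nhds)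
      have := hgap s (by simp [Set.mem_Icc, not_le.mpr hsU])
      linarith
end
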